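/- (Discrete Bollobás–Thomason inequality; Theorem 3.1) Let n ≥ 1 and d ≥ 1 be integers, let S ⊆ ℤ^n be a finite set of n-dimensional grid points, and let F_1, …, F_m be subsets of {1,…,n} (repetitions allowed) such that every i ∈ {1,…,n} belongs to exactly d of the sets F_1,…,F_m. For each j, let S_{F_j} denote the image of S under the projection ℤ^n → ℤ^{F_j} onto the coordinates in F_j. Then |S|^d ≤ ∏_{j=1}^m |S_{F_j}|. -/

import Mathlib

/-!
Induct on the set of coordinates. Fix a coordinate `i` and slice `S` by the value `c` of `t i`.
For every `F j` containing `i`, the projection of `S` onto `F j` is the disjoint union over `c` of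
the projections of the slices onto `F j \ {i}`; for the other `F j`, the projection of a slice is
contained in that of `S`. Applying the induction hypothesis to each slice and summing over `c`,
Hölder's inequality with the `d` exponents `1 / d` attached to the sets containing `i` closes the
induction.
-/

open Finset MeasureTheory
open scoped ENNReal

theorem ENNReal.sum_prod_rpow_le_prod_sum_rpow {ι τ : Type*} (s : Finset ι) (T : Finset τ)
    (f : ι → τ → ℝ≥0∞) {p : ι → ℝ} (hp : ∑ i ∈ s, p i = 1) (hp₀ : ∀ i ∈ s, 0 ≤ p i) :
    ∑ c ∈ T, ∏ i ∈ s, f i c ^ p i ≤ ∏ i ∈ s, (∑ c ∈ T, f i c) ^ p i := by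
  let _ : MeasurableSpace τ := ⊤
  have := ENNReal.lintegral_prod_norm_pow_le (μ := ∑ c ∈ T, Measure.dirac c) (f := f) s
    (fun _ _ => measurable_from_top.aemeasurable) hp hp₀
  simpa only [lintegral_finsetSum_measure, lintegral_dirac' _ measurable_from_top] using this

theorem Nat.sum_pow_le_mul_prod_sum {ι τ : Type*} {J : Finset ι} {T : Finset τ} {d : ℕ}
    (hd : d ≠ 0) (hJ : #J = d) {x : τ → ℕ} {a : ι → τ → ℕ} {B : ℕ}
    (h : ∀ c ∈ T, x c ^ d ≤ B * ∏ j ∈ J, a j c) :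
    (∑ c ∈ T, x c) ^ d ≤ B * ∏ j ∈ J, ∑ c ∈ T, a j c := by
  have hd₀ : (0 : ℝ) < d := by positivity
  have hr₀ : (0 : ℝ) ≤ (d : ℝ)⁻¹ := by positivity
  have hr : ∑ _j ∈ J, (d : ℝ)⁻¹ = 1 := by
    rw [sum_const, hJ, nsmul_eq_mul, mul_inv_cancel₀ hd₀.ne']
  have le_root {y z : ℝ≥0∞} : y ≤ z ^ (d : ℝ)⁻¹ ↔ y ^ d ≤ z := by
    rw [ENNReal.le_rpow_inv_iff hd₀, ENNReal.rpow_natCast]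
  suffices (∑ c ∈ T, x c : ℝ≥0∞) ≤ (B * ∏ j ∈ J, ∑ c ∈ T, a j c : ℝ≥0∞) ^ (d : ℝ)⁻¹ by
    exact_mod_cast le_root.mp this
  push_cast
  rw [ENNReal.mul_rpow_of_nonneg _ _ hr₀, ← ENNReal.prod_rpow_of_nonneg hr₀]
  calc ∑ c ∈ T, (x c : ℝ≥0∞)
      ≤ ∑ c ∈ T, (B : ℝ≥0∞) ^ (d : ℝ)⁻¹ * ∏ j ∈ J, (a j c : ℝ≥0∞) ^ (d : ℝ)⁻¹ := by
        gcongr with c hc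
        rw [ENNReal.prod_rpow_of_nonneg hr₀, ← ENNReal.mul_rpow_of_nonneg _ _ hr₀, le_root]
        exact_mod_cast h c hc
    _ = (B : ℝ≥0∞) ^ (d : ℝ)⁻¹ * ∑ c ∈ T, ∏ j ∈ J, (a j c : ℝ≥0∞) ^ (d : ℝ)⁻¹ :=
        (mul_sum ..).symm
    _ ≤ _ := by
        gcongr
        exact ENNReal.sum_prod_rpow_le_prod_sum_rpow J T _ hr fun _ _ => hr₀

section Projection

variable {ι α : Type*} [DecidableEq ι] [DecidableEq α]

theorem card_image_restrict_erase_of_eval_eq {G : Finset ι} {i : ι} {S : Finset (ι → α)} {c : α}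
    (hS : ∀ t ∈ S, t i = c) : #(S.image (G.erase i).restrict) = #(S.image G.restrict) := by
  rw [← restrict₂_comp_restrict (erase_subset i G), ← image_image]
  refine card_image_of_injOn ?_
  rw [coe_image]
  rintro _ ⟨t, ht, rfl⟩ _ ⟨u, hu, rfl⟩ htu
  funext ⟨k, hk⟩
  by_cases hki : k = i
  · subst hki
    simp only [restrict, hS t ht, hS u hu]
  · exact congrFun htu ⟨k, mem_erase.mpr ⟨hki, hk⟩⟩

theorem card_image_restrict_eq_sum_card_fiber {G : Finset ι} {i : ι} (hi : i ∈ G)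
    (S : Finset (ι → α)) :
    #(S.image G.restrict)
      = ∑ c ∈ S.image (· i), #((S.filter (· i = c)).image (G.erase i).restrict) := by
  rw [card_eq_sum_card_fiberwise (f := fun t => t ⟨i, hi⟩) (t := S.image (· i))]
  · refine sum_congr rfl fun c _ => ?_
    rw [filter_image, card_image_restrict_erase_of_eval_eq (c := c) fun t ht => (mem_filter.mp ht).2]
    rfl
  · rw [coe_image]
    rintro _ ⟨t, ht, rfl⟩
    exact mem_image_of_mem _ ht

theorem prod_card_image_restrict_erase_le {κ : Type*} [Fintype κ] (F : κ → Finset ι) (i : ι)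
    {S' S : Finset (ι → α)} (hS : S' ⊆ S) :
    ∏ j, #(S'.image ((F j).erase i).restrict)
      ≤ (∏ j ∈ {j | i ∉ F j}, #(S.image (F j).restrict))
        * ∏ j ∈ {j | i ∈ F j}, #(S'.image ((F j).erase i).restrict) := by
  rw [← prod_filter_not_mul_prod_filter univ (fun j => i ∈ F j)]
  gcongr with j hj
  rw [erase_eq_of_notMem (mem_filter.mp hj).2]
  exact card_le_card (image_subset_image hS)

theorem card_image_restrict_pow_le_prod_card {κ : Type*} [Fintype κ] {d : ℕ} (hd : d ≠ 0)
    (E : Finset ι) (F : κ → Finset ι) (hFE : ∀ j, F j ⊆ E)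
    (hF : ∀ i ∈ E, #{j | i ∈ F j} = d) (S : Finset (ι → α)) :
    #(S.image E.restrict) ^ d ≤ ∏ j, #(S.image (F j).restrict) := by
  induction E using Finset.induction_on generalizing F S with
  | empty =>
    obtain rfl | hS := S.eq_empty_or_nonempty
    · simp [zero_pow hd]
    calc #(S.image (∅ : Finset ι).restrict) ^ d ≤ 1 :=
          pow_le_one₀ (Nat.zero_le _) (card_le_one_of_subsingleton _)
      _ ≤ ∏ j, #(S.image (F j).restrict) := one_le_prod' fun j _ => (hS.image _).card_pos
  | insert i E hi ih =>
    set B := ∏ j ∈ {j | i ∉ F j}, #(S.image (F j).restrict)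
    set J : Finset κ := {j | i ∈ F j}
    have hfiber (c : α) : #((S.filter (· i = c)).image E.restrict) ^ d
        ≤ B * ∏ j ∈ J, #((S.filter (· i = c)).image ((F j).erase i).restrict) := by
      refine (ih (fun j => (F j).erase i) (fun j => ?_) (fun k hk => ?_) _).trans
        (prod_card_image_restrict_erase_le F i (filter_subset _ S))
      · exact (erase_subset_erase i (hFE j)).trans (erase_insert_subset i E)
      · simpa only [mem_erase, ne_of_mem_of_not_mem hk hi, ne_eq, not_false_eq_true, true_and]
          using hF k (mem_insert_of_mem hk)
    calc #(S.image (insert i E).restrict) ^ d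
        = (∑ c ∈ S.image (· i), #((S.filter (· i = c)).image E.restrict)) ^ d := by
          rw [card_image_restrict_eq_sum_card_fiber (mem_insert_self i E), erase_insert hi]
      _ ≤ B * ∏ j ∈ J, ∑ c ∈ S.image (· i), #((S.filter (· i = c)).image ((F j).erase i).restrict) :=
          Nat.sum_pow_le_mul_prod_sum hd (hF i (mem_insert_self i E)) fun c _ => hfiber c
      _ = B * ∏ j ∈ J, #(S.image (F j).restrict) := by
          congr 1
          exact prod_congr rfl fun j hj =>
            (card_image_restrict_eq_sum_card_fiber (mem_filter.mp hj).2 S).symm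
      _ = ∏ j, #(S.image (F j).restrict) := prod_filter_not_mul_prod_filter _ _ _

end Projection

theorem discrete_bollobas_thomason_general
    {n m d : ℕ} (hd : 1 ≤ d)
    (S : Finset (Fin n → ℤ)) (F : Fin m → Finset (Fin n))
    (hF : ∀ i : Fin n, (Finset.univ.filter (fun j : Fin m => i ∈ F j)).card = d) :
    S.card ^ d
      ≤ ∏ j : Fin m, (S.image (fun t => fun v : {i // i ∈ F j} => t v)).card := by
  have hrestrict : Function.Injective ((univ : Finset (Fin n)).restrict (π := fun _ => ℤ)) :=
    fun t u h => funext fun i => congrFun h ⟨i, mem_univ i⟩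
  rw [← card_image_of_injective S hrestrict]
  exact card_image_restrict_pow_le_prod_card (by omega) univ F (fun j => subset_univ _)
    (fun i _ => hF i) S

/-- **Discrete Bollobás–Thomason inequality** (Theorem 3.1).
`S` is a finite set of points of `ℤ^n`, and `F 0, …, F (m-1)` are subsets of the
coordinates (repetitions allowed) such that every coordinate `i` belongs to
exactly `d` of them.  Then `|S|^d ≤ ∏ j, |S_{F j}|`, where `S_{F j}` is the
projection of `S` onto the coordinates in `F j`. -/
theorem discrete_bollobas_thomason
    {n m d : ℕ} (hn : 1 ≤ n) (hd : 1 ≤ d)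
    (S : Finset (Fin n → ℤ)) (F : Fin m → Finset (Fin n))
    (hF : ∀ i : Fin n, (Finset.univ.filter (fun j : Fin m => i ∈ F j)).card = d) :
    S.card ^ d
      ≤ ∏ j : Fin m, (S.image (fun t => fun v : {i // i ∈ F j} => t v)).card :=
  discrete_bollobas_thomason_general hd S F hF
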